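/- arXiv:1402.7328 — 4 statements merged into one kernel-verified Lean document; each statement's English description precedes it below -/
import Mathlib

section
/- The two forms of the Wasserstein–Orlicz distance coincide: inf_{γ∈Adm(μ,ν)} inf{λ>0 : ∫ψ(d/λ)dγ ≤ 1} = inf{λ>0 : inf_{γ∈Adm(μ,ν)} ∫ψ(d/λ)dγ ≤ 1}. -/
open MeasureTheory Filter Set ENNReal NNReal Topology

noncomputable section

/-- Luxemburg (Orlicz) norm of a nonnegative function. -/
def luxNorm (ψ : ℝ≥0∞ → ℝ≥0∞) {Ω : Type*} [MeasurableSpace Ω]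
    (ν : Measure Ω) (u : Ω → ℝ≥0∞) : ℝ≥0∞ :=
  sInf {l : ℝ≥0∞ | 0 < l ∧ ∫⁻ x, ψ (u x / l) ∂ν ≤ 1}

/-- Standard assumptions on the Orlicz function `ψ`: convex, lower semicontinuous,
non-decreasing, `ψ 0 = 0`, `ψ x → ∞` as `x → ∞`. -/
structure IsOrlicz (ψ : ℝ≥0∞ → ℝ≥0∞) : Prop where
  convex : ∀ a b x y : ℝ≥0∞, a + b = 1 → ψ (a * x + b * y) ≤ a * ψ x + b * ψ y
  lsc : LowerSemicontinuous ψ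
  mono : Monotone ψ
  zero : ψ 0 = 0
  tendsto_top : ∀ C : ℝ≥0∞, ∃ M : ℝ≥0∞, ∀ x, M ≤ x → C ≤ ψ x

/-- Superlinearity at infinity: `ψ x / x → ∞`. -/
def Superlinear (ψ : ℝ≥0∞ → ℝ≥0∞) : Prop :=
  ∀ C : ℝ≥0, ∃ M : ℝ≥0, ∀ x : ℝ≥0, M ≤ x → (C : ℝ≥0∞) * x ≤ ψ x

/-- Null right derivative at `0`: `ψ x / x → 0` as `x → 0⁺`. -/
def FlatAtZero (ψ : ℝ≥0∞ → ℝ≥0∞) : Prop :=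
  ∀ ε : ℝ≥0, 0 < ε → ∃ δ : ℝ≥0, 0 < δ ∧ ∀ x : ℝ≥0, 0 < x → x ≤ δ → ψ x ≤ (ε : ℝ≥0∞) * x

/-- Legendre conjugate `ψ*(y) = sup_{x ≥ 0} (x y - ψ x)`. -/
def conjOrlicz (ψ : ℝ≥0∞ → ℝ≥0∞) (y : ℝ≥0∞) : ℝ≥0∞ :=
  ⨆ x : ℝ≥0, (x : ℝ≥0∞) * y - ψ x

/-- Generalized inverse of `ψ` (with the convention of the paper). -/
def psiInv (ψ : ℝ≥0∞ → ℝ≥0∞) (s : ℝ≥0∞) : ℝ≥0∞ :=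
  sSup {r : ℝ≥0∞ | ψ r ≤ s}

/-- `(X, τ, d)` is an extended Polish space: `d` is an extended distance, complete,
`d`-convergence implies `τ`-convergence, and `d` is `τ × τ` lower semicontinuous. -/
structure IsExtPolish (X : Type*) [TopologicalSpace X] (d : X → X → ℝ≥0∞) : Prop where
  symm : ∀ x y, d x y = d y x
  eq_zero_iff : ∀ x y, d x y = 0 ↔ x = y
  triangle : ∀ x y z, d x z ≤ d x y + d y z
  complete : ∀ u : ℕ → X,
    (∀ ε : ℝ≥0∞, 0 < ε → ∃ N, ∀ m n, N ≤ m → N ≤ n → d (u m) (u n) < ε) →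
    ∃ x, Tendsto (fun n => d (u n) x) atTop (𝓝 0)
  compat : ∀ (u : ℕ → X) (x : X),
    Tendsto (fun n => d (u n) x) atTop (𝓝 0) → Tendsto u atTop (𝓝 x)
  lsc : LowerSemicontinuous fun p : X × X => d p.1 p.2

/-- Admissible transport plans between `μ` and `ν`. -/
def Couplings {X : Type*} [MeasurableSpace X] (μ ν : Measure X) : Set (Measure (X × X)) :=
  {γ | IsProbabilityMeasure γ ∧ γ.map Prod.fst = μ ∧ γ.map Prod.snd = ν}

/-- The Wasserstein–Orlicz extended distance. -/
def Wass (ψ : ℝ≥0∞ → ℝ≥0∞) {X : Type*} [MeasurableSpace X] (d : X → X → ℝ≥0∞)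
    (μ ν : Measure X) : ℝ≥0∞ :=
  ⨅ γ ∈ Couplings μ ν, luxNorm ψ γ (fun p : X × X => d p.1 p.2)

/-- Absolutely continuous curve with finite `L^ψ` energy with respect to the
extended distance `ρ`, on the interval `[a, b]`. -/
def IsACpsi (ψ : ℝ≥0∞ → ℝ≥0∞) {A : Type*} (ρ : A → A → ℝ≥0∞)
    (a b : ℝ) (u : ℝ → A) : Prop :=
  ∃ m : ℝ → ℝ≥0∞, luxNorm ψ (volume.restrict (Set.Icc a b)) m < ⊤ ∧
    ∀ s t : ℝ, a ≤ s → s ≤ t → t ≤ b → ρ (u s) (u t) ≤ ∫⁻ r in Set.Icc s t, m r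

/-- The metric derivative of the curve `u` (with values in a space with extended
distance `ρ`) at time `t` within the interval `I` equals `L`. -/
def HasMDeriv {A : Type*} (ρ : A → A → ℝ≥0∞) (u : ℝ → A) (I : Set ℝ) (t : ℝ)
    (L : ℝ≥0∞) : Prop :=
  Tendsto (fun h : ℝ => ρ (u (t + h)) (u t) / ENNReal.ofReal |h|)
    (𝓝[{h : ℝ | h ≠ 0 ∧ t + h ∈ I}] 0) (𝓝 L)

/-- The support of a Borel measure. -/
def measSupport {Y : Type*} [TopologicalSpace Y] [MeasurableSpace Y] (μ : Measure Y) : Set Y :=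
  {y | ∀ U ∈ 𝓝 y, 0 < μ U}

/-- the two forms of the Wasserstein–Orlicz distance coincide. -/
theorem wass_eq_second_form {X : Type*} [TopologicalSpace X] [PolishSpace X]
    [MeasurableSpace X] [BorelSpace X]
    (d : X → X → ℝ≥0∞) (hX : IsExtPolish X d)
    (ψ : ℝ≥0∞ → ℝ≥0∞) (hψ : IsOrlicz ψ)
    (μ ν : Measure X) [IsProbabilityMeasure μ] [IsProbabilityMeasure ν] :
    Wass ψ d μ ν =
      sInf {l : ℝ≥0∞ | 0 < l ∧
        (⨅ γ ∈ Couplings μ ν, ∫⁻ p : X × X, ψ (d p.1 p.2 / l) ∂γ) ≤ 1} := by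
  apply le_antisymm
  · -- Wass ≤ sInf RHS
    refine le_sInf fun l hl => ?_
    obtain ⟨hl0, hinf⟩ := hl
    refine le_of_forall_gt_imp_ge_of_dense fun l' hll' => ?_
    rcases eq_or_ne l' ⊤ with rfl | hl'top
    · exact le_top
    have hl0' : (0:ℝ≥0∞) < l' := hl0.trans hll'
    have hltop : l ≠ ⊤ := ne_top_of_lt hll'
    have hc1 : (1:ℝ≥0∞) < l' / l := by
      rw [ENNReal.lt_div_iff_mul_lt (Or.inl hl0.ne') (Or.inl hltop), one_mul]
      exact hll'
    have hlt : (⨅ γ ∈ Couplings μ ν, ∫⁻ p : X × X, ψ (d p.1 p.2 / l) ∂γ) < l' / l :=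
      hinf.trans_lt hc1
    simp only [iInf_lt_iff] at hlt
    obtain ⟨γ, hγ, hint⟩ := hlt
    have hle1 : l / l' ≤ 1 := by
      rw [ENNReal.div_le_iff hl0'.ne' hl'top, one_mul]
      exact hll'.le
    have key : ∀ x : ℝ≥0∞, ψ (x / l') ≤ (l / l') * ψ (x / l) := by
      intro x
      have ha : l / l' + (1 - l / l') = 1 := add_tsub_cancel_of_le hle1
      have h := hψ.convex (l / l') (1 - l / l') (x / l) 0 ha
      have heq : (l / l') * (x / l) = x / l' := by
        rw [div_eq_mul_inv, div_eq_mul_inv, div_eq_mul_inv]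
        calc l * l'⁻¹ * (x * l⁻¹) = x * l'⁻¹ * (l * l⁻¹) := by ring
          _ = x * l'⁻¹ := by rw [ENNReal.mul_inv_cancel hl0.ne' hltop, mul_one]
      simpa [hψ.zero, heq] using h
    have hWle : luxNorm ψ γ (fun p : X × X => d p.1 p.2) ≤ l' := by
      refine sInf_le ⟨hl0', ?_⟩
      calc ∫⁻ p : X × X, ψ (d p.1 p.2 / l') ∂γ
          ≤ ∫⁻ p : X × X, (l / l') * ψ (d p.1 p.2 / l) ∂γ :=
            lintegral_mono fun p => key _
        _ = (l / l') * ∫⁻ p : X × X, ψ (d p.1 p.2 / l) ∂γ :=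
            lintegral_const_mul' _ _ (ne_top_of_le_ne_top one_ne_top hle1)
        _ ≤ (l / l') * (l' / l) := mul_le_mul_right hint.le _
        _ = 1 := by
            rw [div_eq_mul_inv, div_eq_mul_inv]
            calc l * l'⁻¹ * (l' * l⁻¹) = (l * l⁻¹) * (l' * l'⁻¹) := by ring
              _ = 1 := by
                rw [ENNReal.mul_inv_cancel hl0.ne' hltop,
                  ENNReal.mul_inv_cancel hl0'.ne' hl'top, one_mul]
    exact le_trans (biInf_le _ hγ) hWle
  · -- sInf RHS ≤ Wass
    refine le_iInf₂ fun γ hγ => ?_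
    refine sInf_le_sInf fun l hl => ?_
    exact ⟨hl.1, le_trans (biInf_le _ hγ) hl.2⟩
end
end

section
/- Let γ ∈ Adm(μ,ν) be a coupling with W_ψ(μ,ν) > 0. Then γ is optimal for W_ψ (i.e. achieves the infimum defining W_ψ(μ,ν)) if and only if ∫_{X×X} ψ(d(x,y)/W_ψ(μ,ν)) dγ(x,y) ≤ 1. -/
open MeasureTheory Filter Set ENNReal NNReal Topology

noncomputable section

/-! Since `W ≤ ‖d‖_{L^ψ_γ}` for every coupling `γ`, the coupling is optimal as soon as `W` is
admissible in the infimum defining `‖d‖_{L^ψ_γ}`. The converse holds because that infimum is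
attained: as `l ↓ ‖d‖`, the functions `ψ (d / l)` increase to `ψ (d / ‖d‖)` since `ψ` is monotone
and lower semicontinuous, and monotone convergence carries `∫ ψ (d / l) dγ ≤ 1` to the limit. -/

theorem LowerSemicontinuous.iSup_comp_eq_of_tendsto {α β ι : Type*} [TopologicalSpace α]
    [Preorder α] [CompleteLinearOrder β] {f : α → β} (hf : LowerSemicontinuous f)
    (hf_mono : Monotone f) {l : Filter ι} [l.NeBot] {x : ι → α} {a : α}
    (hx_le : ∀ i, x i ≤ a) (hx : Tendsto x l (𝓝 a)) :
    ⨆ i, f (x i) = f a := by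
  refine le_antisymm (iSup_le fun i => hf_mono (hx_le i)) (le_of_forall_lt fun b hb => ?_)
  obtain ⟨i, hi⟩ := (hx.eventually (hf a b hb)).exists
  exact hi.trans_le (le_iSup (fun i => f (x i)) i)

section luxNorm

variable {Ω : Type*} [MeasurableSpace Ω] {ψ : ℝ≥0∞ → ℝ≥0∞} {ν : Measure Ω} {u : Ω → ℝ≥0∞}

theorem luxNorm_le_of_lintegral_le_one {l : ℝ≥0∞} (hl : 0 < l)
    (h : ∫⁻ x, ψ (u x / l) ∂ν ≤ 1) : luxNorm ψ ν u ≤ l :=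
  sInf_le ⟨hl, h⟩

theorem lintegral_le_one_of_luxNorm_lt (hψ : Monotone ψ) {l : ℝ≥0∞}
    (h : luxNorm ψ ν u < l) : ∫⁻ x, ψ (u x / l) ∂ν ≤ 1 := by
  obtain ⟨l', ⟨-, hl'⟩, hl'l⟩ := sInf_lt_iff.mp h
  calc ∫⁻ x, ψ (u x / l) ∂ν ≤ ∫⁻ x, ψ (u x / l') ∂ν :=
        lintegral_mono fun x => hψ (ENNReal.div_le_div_left hl'l.le _)
    _ ≤ 1 := hl'

theorem lintegral_div_luxNorm_le_one (hψ_mono : Monotone ψ) (hψ_lsc : LowerSemicontinuous ψ)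
    (hψ_zero : ψ 0 = 0) (hu : AEMeasurable u ν) :
    ∫⁻ x, ψ (u x / luxNorm ψ ν u) ∂ν ≤ 1 := by
  set L := luxNorm ψ ν u
  rcases eq_or_ne L ⊤ with hL | hL
  · simp [hL, hψ_zero]
  obtain ⟨c, hc_anti, hc_mem, hc_lim⟩ := exists_seq_strictAnti_tendsto' hL.lt_top
  have hdiv_lim (y : ℝ≥0∞) : Tendsto (fun n => y / c n) atTop (𝓝 (y / L)) := by
    simp only [div_eq_mul_inv]
    exact ENNReal.Tendsto.const_mul (tendsto_inv_iff.mpr hc_lim)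
      (Or.inl (ENNReal.inv_ne_zero.mpr hL))
  have hsup (y : ℝ≥0∞) : ⨆ n, ψ (y / c n) = ψ (y / L) :=
    hψ_lsc.iSup_comp_eq_of_tendsto hψ_mono
      (fun n => ENNReal.div_le_div_left (hc_mem n).1.le y) (hdiv_lim y)
  calc ∫⁻ x, ψ (u x / L) ∂ν = ∫⁻ x, ⨆ n, ψ (u x / c n) ∂ν := by simp only [hsup]
    _ = ⨆ n, ∫⁻ x, ψ (u x / c n) ∂ν :=
        lintegral_iSup' (fun n => hψ_mono.measurable.comp_aemeasurable (hu.div_const _))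
          (ae_of_all _ fun x m n hmn => hψ_mono (ENNReal.div_le_div_left (hc_anti.antitone hmn) _))
    _ ≤ 1 := iSup_le fun n => lintegral_le_one_of_luxNorm_lt hψ_mono (hc_mem n).1

end luxNorm

theorem optimal_iff_integral_le_one_general {X : Type*} [TopologicalSpace X] [PolishSpace X]
    [MeasurableSpace X] [BorelSpace X]
    (d : X → X → ℝ≥0∞) (hX : IsExtPolish X d)
    (ψ : ℝ≥0∞ → ℝ≥0∞) (hψ : IsOrlicz ψ)
    (μ ν : Measure X)
    (γ : Measure (X × X)) (hγ : γ ∈ Couplings μ ν)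
    (hpos : 0 < Wass ψ d μ ν) :
    luxNorm ψ γ (fun p : X × X => d p.1 p.2) = Wass ψ d μ ν ↔
      ∫⁻ p : X × X, ψ (d p.1 p.2 / Wass ψ d μ ν) ∂γ ≤ 1 := by
  have hW_le : Wass ψ d μ ν ≤ luxNorm ψ γ (fun p : X × X => d p.1 p.2) := iInf₂_le γ hγ
  constructor
  · intro hopt
    rw [← hopt]
    exact lintegral_div_luxNorm_le_one hψ.mono hψ.lsc hψ.zero hX.lsc.measurable.aemeasurable
  · exact fun h => le_antisymm (luxNorm_le_of_lintegral_le_one hpos h) hW_le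

/-- characterization of optimal plans for `W_ψ`. -/
theorem optimal_iff_integral_le_one {X : Type*} [TopologicalSpace X] [PolishSpace X]
    [MeasurableSpace X] [BorelSpace X]
    (d : X → X → ℝ≥0∞) (hX : IsExtPolish X d)
    (ψ : ℝ≥0∞ → ℝ≥0∞) (hψ : IsOrlicz ψ)
    (μ ν : Measure X) [IsProbabilityMeasure μ] [IsProbabilityMeasure ν]
    (γ : Measure (X × X)) (hγ : γ ∈ Couplings μ ν)
    (hpos : 0 < Wass ψ d μ ν) :
    luxNorm ψ γ (fun p : X × X => d p.1 p.2) = Wass ψ d μ ν ↔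
      ∫⁻ p : X × X, ψ (d p.1 p.2 / Wass ψ d μ ν) ∂γ ≤ 1 :=
  optimal_iff_integral_le_one_general d hX ψ hψ μ ν γ hγ hpos
end
end

section
/- For a piecewise constant curve σ_x:[0,1]→X with σ_x(t)=x_i for t∈[i/2^N,(i+1)/2^N), i=0,...,2^N−1, one has sup_{h∈(0,1)} (1/h)∫_0^{1−h} d(σ_x(t+h),σ_x(t)) dt ≤ 2 Σ_{i=0}^{2^N−1} d(x_i, x_{i+1}). -/
open MeasureTheory Filter Set ENNReal NNReal Topology

noncomputable section

/-! With `φ t = ⌊2^N t⌋₊` the curve is `σ t = x_{φ t}` on `[0, 1)`. By the triangle inequality,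
`d(σ(t+h), σ t)` is at most the sum of the jumps `d(x_k, x_{k+1})` over `φ t ≤ k < φ (t+h)`.
Since `φ` is monotone, the times `t` at which a given jump `k` is counted form a set of diameter,
hence of Lebesgue measure, at most `h`; integrating gives the bound even with `h` in place of `2h`. -/

theorem Monotone.volume_setOf_le_lt_comp_add_le {φ : ℝ → ℕ} (hφ : Monotone φ) (h : ℝ) (k : ℕ) :
    volume {t | φ t ≤ k ∧ k < φ (t + h)} ≤ ENNReal.ofReal h := by
  have hsub : ∀ s ∈ {t | φ t ≤ k ∧ k < φ (t + h)}, ∀ t ∈ {t | φ t ≤ k ∧ k < φ (t + h)},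
      s - t ≤ h := fun s hs t ht =>
    le_of_not_gt fun hst => (hs.1.trans_lt ht.2).not_ge (hφ (by linarith))
  calc volume {t | φ t ≤ k ∧ k < φ (t + h)} ≤ Metric.ediam {t | φ t ≤ k ∧ k < φ (t + h)} :=
        Real.volume_le_diam _
    _ ≤ ENNReal.ofReal h := Metric.ediam_le fun s hs t ht => by
        rw [edist_dist, Real.dist_eq]
        exact ENNReal.ofReal_le_ofReal (abs_sub_le_iff.2 ⟨hsub s hs t ht, hsub t ht s hs⟩)

section StepCurve

variable {X : Type*} [PseudoEMetricSpace X]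

theorem edist_comp_add_le_sum_indicator {φ : ℝ → ℕ} (hφ : Monotone φ) (y : ℕ → X) {h : ℝ}
    (hh : 0 ≤ h) {n : ℕ} {t : ℝ} (ht : φ (t + h) ≤ n) :
    edist (y (φ (t + h))) (y (φ t)) ≤ ∑ k ∈ Finset.range n,
      {t | φ t ≤ k ∧ k < φ (t + h)}.indicator (fun _ => edist (y k) (y (k + 1))) t := by
  classical
  have hwindow : (Finset.range n).filter (fun k => t ∈ {t | φ t ≤ k ∧ k < φ (t + h)}) =
      Finset.Ico (φ t) (φ (t + h)) := by
    ext k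
    simp only [Finset.mem_filter, Finset.mem_range, Finset.mem_Ico, mem_ofPred_eq]
    omega
  rw [edist_comm, Finset.sum_indicator_eq_sum_filter, hwindow]
  exact edist_le_Ico_sum_edist y (hφ (le_add_of_nonneg_right hh))

theorem setLIntegral_edist_comp_add_le {φ : ℝ → ℕ} (hφ : Monotone φ) (y : ℕ → X) {h : ℝ}
    (hh : 0 ≤ h) {n : ℕ} {s : Set ℝ} (hs : MeasurableSet s) (hsn : ∀ t ∈ s, φ (t + h) ≤ n) :
    ∫⁻ t in s, edist (y (φ (t + h))) (y (φ t)) ≤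
      ENNReal.ofReal h * ∑ k ∈ Finset.range n, edist (y k) (y (k + 1)) := by
  calc ∫⁻ t in s, edist (y (φ (t + h))) (y (φ t))
      ≤ ∫⁻ t in s, ∑ k ∈ Finset.range n,
          {t | φ t ≤ k ∧ k < φ (t + h)}.indicator (fun _ => edist (y k) (y (k + 1))) t :=
        setLIntegral_mono' hs fun t ht => edist_comp_add_le_sum_indicator hφ y hh (hsn t ht)
    _ ≤ ∫⁻ t, ∑ k ∈ Finset.range n,
          {t | φ t ≤ k ∧ k < φ (t + h)}.indicator (fun _ => edist (y k) (y (k + 1))) t :=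
        setLIntegral_le_lintegral _ _
    _ ≤ ∑ k ∈ Finset.range n, ∫⁻ t,
          {t | φ t ≤ k ∧ k < φ (t + h)}.indicator (fun _ => edist (y k) (y (k + 1))) t :=
        (lintegral_finsetSum _ fun k _ => measurable_const.indicator
          ((measurableSet_le hφ.measurable measurable_const).inter
            (measurableSet_lt measurable_const (hφ.measurable.comp (measurable_add_const h))))).le
    _ ≤ ∑ k ∈ Finset.range n, edist (y k) (y (k + 1)) * ENNReal.ofReal h := by
        gcongr with k
        exact (lintegral_indicator_const_le _ _).trans
          (mul_le_mul_right (hφ.volume_setOf_le_lt_comp_add_le h k) _)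
    _ = _ := by rw [Finset.mul_sum]; simp_rw [mul_comm]

end StepCurve

theorem Fin.sum_range_clamp {M : Type*} [AddCommMonoid M] (n : ℕ)
    (f : Fin (n + 1) → Fin (n + 1) → M) :
    ∑ k ∈ Finset.range n, f (Fin.clamp k n) (Fin.clamp (k + 1) n) =
      ∑ i : Fin n, f i.castSucc i.succ := by
  rw [← Fin.sum_univ_eq_sum_range]
  refine Finset.sum_congr rfl fun i _ => ?_
  congr 1 <;> ext <;> simp [Fin.coe_clamp, i.isLt.le, Nat.succ_le_of_lt i.isLt]

theorem eq_clamp_floor_of_forall_Ico_eq {X : Type*} {n : ℕ} (hn : 0 < n) {x : Fin (n + 1) → X}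
    {σ : ℝ → X} (hσ : ∀ i : Fin n, ∀ t ∈ Ico (((i : ℕ) : ℝ) / n) ((((i : ℕ) : ℝ) + 1) / n),
      σ t = x i.castSucc) (t : ℝ) (ht : t ∈ Ico (0 : ℝ) 1) :
    σ t = x (Fin.clamp ⌊t * n⌋₊ n) := by
  have hn' : (0 : ℝ) < n := Nat.cast_pos.2 hn
  have htn : 0 ≤ t * n := mul_nonneg ht.1 hn'.le
  have hlt : ⌊t * n⌋₊ < n := (Nat.floor_lt htn).2 (by nlinarith [ht.2])
  have hmem : t ∈ Ico ((⌊t * n⌋₊ : ℝ) / n) (((⌊t * n⌋₊ : ℝ) + 1) / n) := by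
    rw [mem_Ico, div_le_iff₀ hn', lt_div_iff₀ hn']
    exact ⟨Nat.floor_le htn, Nat.lt_floor_add_one _⟩
  rw [hσ ⟨_, hlt⟩ t hmem]
  congr 1
  ext
  simp [Fin.coe_clamp, hlt.le]

/-- estimate of the averaged difference quotients of a piecewise
constant curve by twice the total jump length. -/
theorem piecewise_constant_difference_quotient {X : Type*} (d : X → X → ℝ≥0∞)
    (hsymm : ∀ x y, d x y = d y x) (hrefl : ∀ x, d x x = 0)
    (htri : ∀ x y z, d x z ≤ d x y + d y z)
    (N : ℕ) (x : Fin (2 ^ N + 1) → X) (σ : ℝ → X)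
    (hσ : ∀ i : Fin (2 ^ N), ∀ t ∈ Ico (((i : ℕ) : ℝ) / 2 ^ N) ((((i : ℕ) : ℝ) + 1) / 2 ^ N),
      σ t = x i.castSucc)
    (h : ℝ) (hh : h ∈ Ioo (0 : ℝ) 1) :
    ∫⁻ t in Icc (0 : ℝ) (1 - h), d (σ (t + h)) (σ t) ≤
      ENNReal.ofReal (2 * h) * ∑ i : Fin (2 ^ N), d (x i.castSucc) (x i.succ) := by
  let _ : PseudoEMetricSpace X :=
    { edist := d, edist_self := hrefl, edist_comm := hsymm, edist_triangle := htri }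
  set φ : ℝ → ℕ := fun t => ⌊t * (2 ^ N : ℕ)⌋₊
  have hφ : Monotone φ := fun s t hst =>
    Nat.floor_le_floor (mul_le_mul_of_nonneg_right hst (Nat.cast_nonneg _))
  have hstep := eq_clamp_floor_of_forall_Ico_eq (Nat.two_pow_pos N) (by exact_mod_cast hσ)
  have hmem : ∀ t ∈ Ico 0 (1 - h), t ∈ Ico 0 1 ∧ t + h ∈ Ico 0 1 := fun t ht =>
    ⟨⟨ht.1, by linarith [ht.2, hh.1]⟩, ⟨by linarith [ht.1, hh.1], by linarith [ht.2]⟩⟩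
  calc ∫⁻ t in Icc 0 (1 - h), d (σ (t + h)) (σ t)
      = ∫⁻ t in Ico 0 (1 - h), edist (x (Fin.clamp (φ (t + h)) _)) (x (Fin.clamp (φ t) _)) := by
        rw [← setLIntegral_congr Ico_ae_eq_Icc]
        refine setLIntegral_congr_fun measurableSet_Ico fun t ht => ?_
        rw [hstep t (hmem t ht).1, hstep _ (hmem t ht).2]
        rfl
    _ ≤ ENNReal.ofReal h * ∑ k ∈ Finset.range (2 ^ N),
          edist (x (Fin.clamp k _)) (x (Fin.clamp (k + 1) _)) :=
        setLIntegral_edist_comp_add_le hφ _ hh.1.le measurableSet_Ico fun t ht =>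
          (hφ (show t + h ≤ 1 by linarith [ht.2])).trans
            (by simp only [φ, one_mul, Nat.floor_natCast, le_rfl])
    _ ≤ ENNReal.ofReal (2 * h) * ∑ i : Fin (2 ^ N), d (x i.castSucc) (x i.succ) := by
        rw [Fin.sum_range_clamp (f := fun a b => edist (x a) (x b))]
        exact mul_le_mul' (ENNReal.ofReal_le_ofReal (by linarith [hh.1])) le_rfl
end
end

section
/- For the piecewise constant curve σ_x:[0,1]→X with σ_x(t)=x_i for t∈[i/2^N,(i+1)/2^N), and for every h with 2^{-N} ≤ h < 1 one has ∫_0^{1−h} ψ( d(σ_x(t+h),σ_x(t)) / (2h) ) dt ≤ Σ_{j=0}^{2^N−1} 2^{−N} ψ( 2^N d(x_{j+1}, x_j) ). -/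
open MeasureTheory Filter Set ENNReal NNReal Topology

noncomputable section

/-! For `t ∈ [0, 1 - h)` the curve takes the values `σ t = x i` and `σ (t + h) = x j` with
`i = ⌊2^N t⌋` and `j = ⌊2^N (t + h)⌋`, and `0 < j - i ≤ 2 · 2^N h` because `2^N h ≥ 1`.
The triangle inequality along `x i, …, x j` and Jensen's inequality with the weights
`(2 · 2^N h)⁻¹` bound the integrand by the weighted sum of `ψ (2^N d(x (l+1), x l))` over the jumps
`l` crossed by `[t, t + h]`. Each jump is crossed only for `t` in a window of length `h`, so
integrating yields the factor `h / (2 · 2^N h) ≤ 2^{-N}`. -/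

lemma IsOrlicz.convexOn {ψ : ℝ≥0∞ → ℝ≥0∞} (hψ : IsOrlicz ψ) : ConvexOn ℝ≥0∞ univ ψ :=
  ⟨convex_univ, fun x _ y _ a b _ _ hab => hψ.convex a b x y hab⟩

lemma ConvexOn.map_sum_le_of_sum_le_one {ψ : ℝ≥0∞ → ℝ≥0∞} (hψ : ConvexOn ℝ≥0∞ univ ψ)
    (hψ0 : ψ 0 = 0) {ι : Type*} (s : Finset ι) (w a : ι → ℝ≥0∞) (hw : ∑ l ∈ s, w l ≤ 1) :
    ψ (∑ l ∈ s, w l * a l) ≤ ∑ l ∈ s, w l * ψ (a l) := by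
  induction s using Finset.cons_induction generalizing w with
  | empty => simp [hψ0]
  | cons i s _ ih =>
    rw [Finset.sum_cons] at hw ⊢
    rw [Finset.sum_cons]
    set b := 1 - w i
    have hwi_top : w i ≠ ⊤ := ne_top_of_le_ne_top one_ne_top (le_of_add_le_left hw)
    have hib : w i + b = 1 := add_tsub_cancel_of_le (le_of_add_le_left hw)
    have hsb : ∑ l ∈ s, w l ≤ b := ENNReal.le_sub_of_add_le_left hwi_top hw
    have hb : b ≠ ⊤ := sub_ne_top one_ne_top
    have rescale : ∀ l ∈ s, b * (w l / b) = w l := fun l hl =>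
      ENNReal.mul_div_cancel'
        (fun hb0 => le_antisymm ((Finset.single_le_sum (fun _ _ => zero_le) hl).trans
          (hsb.trans hb0.le)) zero_le)
        (fun hbt => absurd hbt hb)
    have hs1 : ∑ l ∈ s, w l / b ≤ 1 := by
      simp only [div_eq_mul_inv, ← Finset.sum_mul]
      exact ENNReal.div_le_of_le_mul (by rwa [one_mul])
    calc ψ (w i * a i + ∑ l ∈ s, w l * a l)
        = ψ (w i * a i + b * ∑ l ∈ s, w l / b * a l) := by
          rw [Finset.mul_sum]
          congr 2
          exact Finset.sum_congr rfl fun l hl => by rw [← mul_assoc, rescale l hl]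
      _ ≤ w i * ψ (a i) + b * ψ (∑ l ∈ s, w l / b * a l) :=
          hψ.2 (mem_univ _) (mem_univ _) zero_le zero_le hib
      _ ≤ w i * ψ (a i) + b * ∑ l ∈ s, w l / b * ψ (a l) := by gcongr; exact ih _ hs1
      _ = w i * ψ (a i) + ∑ l ∈ s, w l * ψ (a l) := by
          rw [Finset.mul_sum]
          congr 1
          exact Finset.sum_congr rfl fun l hl => by rw [← mul_assoc, rescale l hl]

lemma le_Ico_sum_of_triangle {X : Type*} (d : X → X → ℝ≥0∞)
    (htri : ∀ x y z, d x z ≤ d x y + d y z) (y : ℕ → X) {i j : ℕ} (hij : i < j) :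
    d (y j) (y i) ≤ ∑ l ∈ Finset.Ico i j, d (y (l + 1)) (y l) := by
  induction j, hij using Nat.le_induction with
  | base => simp
  | succ j hij ih =>
    calc d (y (j + 1)) (y i) ≤ d (y (j + 1)) (y j) + d (y j) (y i) := htri _ _ _
      _ ≤ d (y (j + 1)) (y j) + ∑ l ∈ Finset.Ico i j, d (y (l + 1)) (y l) := by gcongr
      _ = ∑ l ∈ Finset.Ico i (j + 1), d (y (l + 1)) (y l) := by
          rw [Finset.sum_Ico_succ_top (Nat.le_of_succ_le hij), add_comm]

lemma Nat.floor_lt_floor_of_add_one_le {α : Type*} [Semiring α] [LinearOrder α]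
    [IsStrictOrderedRing α] [FloorSemiring α] {a b : α} (ha : 0 ≤ a) (hab : a + 1 ≤ b) :
    ⌊a⌋₊ < ⌊b⌋₊ :=
  Nat.le_floor (by push_cast; exact (add_le_add_left (Nat.floor_le ha) 1).trans hab)

section PiecewiseConstant

variable {X : Type*} {n : ℕ} {h t : ℝ}

/-- The times `t` for which `[t, t + h]` contains the jump point `(l + 1) / n`. -/
def crossingWindow (n : ℕ) (h : ℝ) (l : ℕ) : Set ℝ :=
  Ico (((l : ℝ) + 1) / n - h) (((l : ℝ) + 1) / n)

lemma measurableSet_crossingWindow (n : ℕ) (h : ℝ) (l : ℕ) :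
    MeasurableSet (crossingWindow n h l) :=
  measurableSet_Ico

lemma volume_crossingWindow (n : ℕ) (h : ℝ) (l : ℕ) :
    volume (crossingWindow n h l) = ENNReal.ofReal h := by
  simp [crossingWindow]

lemma mem_crossingWindow (hn : 0 < n) {l : ℕ}
    (hl : l ∈ Finset.Ico ⌊n * t⌋₊ ⌊n * (t + h)⌋₊) : t ∈ crossingWindow n h l := by
  obtain ⟨hil, hlj⟩ := Finset.mem_Ico.mp hl
  have hn' : (0 : ℝ) < n := Nat.cast_pos.mpr hn
  have hlj' : ((l : ℝ) + 1) ≤ n * (t + h) :=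
    mod_cast (Nat.le_floor_iff' l.succ_ne_zero).mp hlj
  have hil' : (n : ℝ) * t < l + 1 :=
    (Nat.lt_floor_add_one _).trans_le (by exact_mod_cast Nat.succ_le_succ hil)
  constructor
  · rw [sub_le_iff_le_add, div_le_iff₀ hn']; linarith
  · rw [lt_div_iff₀ hn']; linarith

lemma floor_sub_floor_le (ht : 0 ≤ t) (hnh : 1 ≤ n * h) :
    ((⌊n * (t + h)⌋₊ - ⌊n * t⌋₊ : ℕ) : ℝ) ≤ 2 * n * h := by
  have hmono : ⌊n * t⌋₊ ≤ ⌊n * (t + h)⌋₊ := Nat.floor_le_floor (by nlinarith)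
  rw [Nat.cast_sub hmono]
  linarith [Nat.floor_le (show 0 ≤ n * (t + h) by nlinarith), Nat.lt_floor_add_one ((n : ℝ) * t)]

variable (d : X → X → ℝ≥0∞) {ψ : ℝ≥0∞ → ℝ≥0∞} (y : ℕ → X) {σ : ℝ → X}

lemma orlicz_diffQuot_le_sum_indicator (htri : ∀ x y z, d x z ≤ d x y + d y z)
    (hψ : ConvexOn ℝ≥0∞ univ ψ) (hψ0 : ψ 0 = 0) (hψm : Monotone ψ)
    (hσ : ∀ t ∈ Ico (0 : ℝ) 1, σ t = y ⌊n * t⌋₊) (hn : 0 < n) (hnh : 1 ≤ n * h)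
    (ht : t ∈ Ico 0 (1 - h)) :
    ψ (d (σ (t + h)) (σ t) / ENNReal.ofReal (2 * h)) ≤
      ∑ l ∈ Finset.range n, (crossingWindow n h l).indicator
        (fun _ => ENNReal.ofReal (2 * n * h)⁻¹ * ψ (n * d (y (l + 1)) (y l))) t := by
  obtain ⟨ht0, ht1⟩ := ht
  have hn' : (0 : ℝ) < n := Nat.cast_pos.mpr hn
  have hh : 0 < h := pos_of_mul_pos_right (one_pos.trans_le hnh) hn'.le
  set c := ENNReal.ofReal (2 * n * h)⁻¹
  set i := ⌊n * t⌋₊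
  set j := ⌊n * (t + h)⌋₊
  have hij : i < j := Nat.floor_lt_floor_of_add_one_le (by positivity) (by linarith)
  have hjn : j < n := (Nat.floor_lt (by positivity)).mpr (by nlinarith)
  have hc : (ENNReal.ofReal (2 * h))⁻¹ = c * n := by
    rw [← ENNReal.ofReal_inv_of_pos (by positivity), ← ENNReal.ofReal_natCast,
      ← ENNReal.ofReal_mul (by positivity)]
    congr 1
    field_simp
  have hweights : ∑ _l ∈ Finset.Ico i j, c ≤ 1 := by
    rw [Finset.sum_const, Nat.card_Ico, nsmul_eq_mul, ← ENNReal.ofReal_natCast,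
      ← ENNReal.ofReal_mul (by positivity), ← ENNReal.ofReal_one]
    refine ENNReal.ofReal_le_ofReal ?_
    rw [← div_eq_mul_inv, div_le_one (by positivity)]
    exact floor_sub_floor_le ht0 hnh
  rw [hσ t ⟨ht0, by linarith⟩, hσ (t + h) ⟨by linarith, by linarith⟩]
  calc ψ (d (y j) (y i) / ENNReal.ofReal (2 * h))
      ≤ ψ (∑ l ∈ Finset.Ico i j, c * (n * d (y (l + 1)) (y l))) := by
        refine hψm ?_
        rw [div_eq_mul_inv, hc]
        calc d (y j) (y i) * (c * n)
            ≤ (∑ l ∈ Finset.Ico i j, d (y (l + 1)) (y l)) * (c * n) := by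
              gcongr; exact le_Ico_sum_of_triangle d htri y hij
          _ = ∑ l ∈ Finset.Ico i j, c * (n * d (y (l + 1)) (y l)) := by
              rw [Finset.sum_mul]
              exact Finset.sum_congr rfl fun l _ => by ring
    _ ≤ ∑ l ∈ Finset.Ico i j, c * ψ (n * d (y (l + 1)) (y l)) :=
        hψ.map_sum_le_of_sum_le_one hψ0 _ _ _ hweights
    _ = ∑ l ∈ Finset.Ico i j, (crossingWindow n h l).indicator
          (fun _ => c * ψ (n * d (y (l + 1)) (y l))) t :=
        Finset.sum_congr rfl fun l hl => (indicator_of_mem (mem_crossingWindow hn hl)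
          (fun _ => c * ψ (n * d (y (l + 1)) (y l)))).symm
    _ ≤ _ := Finset.sum_le_sum_of_subset (fun l hl => Finset.mem_range.mpr
        ((Finset.mem_Ico.mp hl).2.trans hjn))

theorem lintegral_orlicz_diffQuot_le (htri : ∀ x y z, d x z ≤ d x y + d y z)
    (hψ : ConvexOn ℝ≥0∞ univ ψ) (hψ0 : ψ 0 = 0) (hψm : Monotone ψ)
    (hσ : ∀ t ∈ Ico (0 : ℝ) 1, σ t = y ⌊n * t⌋₊) (hn : 0 < n) (hnh : 1 ≤ n * h) :
    ∫⁻ t in Ico 0 (1 - h), ψ (d (σ (t + h)) (σ t) / ENNReal.ofReal (2 * h)) ≤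
      ∑ l ∈ Finset.range n, (n : ℝ≥0∞)⁻¹ * ψ (n * d (y (l + 1)) (y l)) := by
  have hn' : (0 : ℝ) < n := Nat.cast_pos.mpr hn
  have hh : 0 < h := pos_of_mul_pos_right (one_pos.trans_le hnh) hn'.le
  set c := ENNReal.ofReal (2 * n * h)⁻¹
  set D : ℕ → ℝ≥0∞ := fun l => ψ (n * d (y (l + 1)) (y l))
  have hch : c * ENNReal.ofReal h ≤ (n : ℝ≥0∞)⁻¹ := by
    rw [← ENNReal.ofReal_mul (by positivity), ← ENNReal.ofReal_natCast,
      ← ENNReal.ofReal_inv_of_pos hn']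
    refine ENNReal.ofReal_le_ofReal ?_
    rw [show (2 * n * h)⁻¹ * h = (2 * (n : ℝ))⁻¹ by field_simp]
    exact inv_anti₀ hn' (by linarith)
  calc ∫⁻ t in Ico 0 (1 - h), ψ (d (σ (t + h)) (σ t) / ENNReal.ofReal (2 * h))
      ≤ ∫⁻ t in Ico 0 (1 - h), ∑ l ∈ Finset.range n,
          (crossingWindow n h l).indicator (fun _ => c * D l) t :=
        setLIntegral_mono' measurableSet_Ico fun t ht =>
          orlicz_diffQuot_le_sum_indicator d y htri hψ hψ0 hψm hσ hn hnh ht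
    _ ≤ ∫⁻ t, ∑ l ∈ Finset.range n, (crossingWindow n h l).indicator (fun _ => c * D l) t :=
        setLIntegral_le_lintegral _ _
    _ = ∑ l ∈ Finset.range n, c * D l * ENNReal.ofReal h := by
        rw [lintegral_finsetSum _ fun l _ =>
          measurable_const.indicator (measurableSet_crossingWindow n h l)]
        simp_rw [lintegral_indicator_const (measurableSet_crossingWindow n h _),
          volume_crossingWindow]
    _ ≤ ∑ l ∈ Finset.range n, (n : ℝ≥0∞)⁻¹ * D l := by
        refine Finset.sum_le_sum fun l _ => ?_
        rw [mul_right_comm]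
        gcongr

end PiecewiseConstant

lemma eq_clamp_floor_of_forall_Ico {X : Type*} {n : ℕ} (hn : 0 < n) (x : Fin (n + 1) → X)
    {σ : ℝ → X} (hσ : ∀ i : Fin n, ∀ t ∈ Ico (((i : ℕ) : ℝ) / n) ((((i : ℕ) : ℝ) + 1) / n),
      σ t = x i.castSucc)
    {t : ℝ} (ht : t ∈ Ico (0 : ℝ) 1) : σ t = x (Fin.clamp ⌊n * t⌋₊ n) := by
  obtain ⟨ht0, ht1⟩ := ht
  have hn' : (0 : ℝ) < n := Nat.cast_pos.mpr hn
  have hi : ⌊n * t⌋₊ < n := (Nat.floor_lt (by positivity)).mpr (by nlinarith)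
  have hmem : t ∈ Ico ((⌊n * t⌋₊ : ℝ) / n) (((⌊n * t⌋₊ : ℝ) + 1) / n) := by
    constructor
    · rw [div_le_iff₀ hn']; linarith [Nat.floor_le (by positivity : (0 : ℝ) ≤ n * t)]
    · rw [lt_div_iff₀ hn']; linarith [Nat.lt_floor_add_one ((n : ℝ) * t)]
  rw [hσ ⟨_, hi⟩ t hmem]
  exact congrArg x (Fin.ext (by simp [Fin.clamp, hi.le]))

theorem piecewise_constant_orlicz_estimate_general {X : Type*} (d : X → X → ℝ≥0∞)
    (htri : ∀ x y z, d x z ≤ d x y + d y z)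
    (ψ : ℝ≥0∞ → ℝ≥0∞) (hψ : IsOrlicz ψ)
    (N : ℕ) (x : Fin (2 ^ N + 1) → X) (σ : ℝ → X)
    (hσ : ∀ i : Fin (2 ^ N), ∀ t ∈ Ico (((i : ℕ) : ℝ) / 2 ^ N) ((((i : ℕ) : ℝ) + 1) / 2 ^ N),
      σ t = x i.castSucc)
    (h : ℝ) (hh1 : ((2 : ℝ) ^ N)⁻¹ ≤ h) :
    ∫⁻ t in Icc (0 : ℝ) (1 - h), ψ (d (σ (t + h)) (σ t) / ENNReal.ofReal (2 * h)) ≤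
      ∑ j : Fin (2 ^ N), ((2 : ℝ≥0∞) ^ N)⁻¹ * ψ ((2 : ℝ≥0∞) ^ N * d (x j.succ) (x j.castSucc)) := by
  have hR : ((2 ^ N : ℕ) : ℝ) = 2 ^ N := by norm_num
  have hE : ((2 ^ N : ℕ) : ℝ≥0∞) = 2 ^ N := by norm_num
  have hnh : 1 ≤ ((2 ^ N : ℕ) : ℝ) * h := by
    rw [hR]; exact (inv_le_iff_one_le_mul₀' (by positivity)).mp hh1
  have hsample (t : ℝ) (ht : t ∈ Ico (0 : ℝ) 1) :
      σ t = x (Fin.clamp ⌊((2 ^ N : ℕ) : ℝ) * t⌋₊ (2 ^ N)) :=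
    eq_clamp_floor_of_forall_Ico (Nat.two_pow_pos N) x (by rwa [hR]) ht
  have hclamp (j : Fin (2 ^ N)) :
      Fin.clamp j (2 ^ N) = j.castSucc ∧ Fin.clamp (j + 1) (2 ^ N) = j.succ :=
    ⟨Fin.ext (by simp [Fin.clamp, j.isLt.le]), Fin.ext (by simp [Fin.clamp, j.isLt])⟩
  rw [setLIntegral_congr Ico_ae_eq_Icc.symm]
  refine (lintegral_orlicz_diffQuot_le d (fun l => x (Fin.clamp l (2 ^ N))) htri
    hψ.convexOn hψ.zero hψ.mono hsample (Nat.two_pow_pos N) hnh).trans_eq ?_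
  rw [← Fin.sum_univ_eq_sum_range]
  simp only [hE, hclamp]

/-- Orlicz estimate of the difference quotients of a piecewise constant
curve. -/
theorem piecewise_constant_orlicz_estimate {X : Type*} (d : X → X → ℝ≥0∞)
    (hsymm : ∀ x y, d x y = d y x) (hrefl : ∀ x, d x x = 0)
    (htri : ∀ x y z, d x z ≤ d x y + d y z)
    (ψ : ℝ≥0∞ → ℝ≥0∞) (hψ : IsOrlicz ψ)
    (N : ℕ) (x : Fin (2 ^ N + 1) → X) (σ : ℝ → X)
    (hσ : ∀ i : Fin (2 ^ N), ∀ t ∈ Ico (((i : ℕ) : ℝ) / 2 ^ N) ((((i : ℕ) : ℝ) + 1) / 2 ^ N),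
      σ t = x i.castSucc)
    (h : ℝ) (hh1 : ((2 : ℝ) ^ N)⁻¹ ≤ h) (hh2 : h < 1) :
    ∫⁻ t in Icc (0 : ℝ) (1 - h), ψ (d (σ (t + h)) (σ t) / ENNReal.ofReal (2 * h)) ≤
      ∑ j : Fin (2 ^ N), ((2 : ℝ≥0∞) ^ N)⁻¹ * ψ ((2 : ℝ≥0∞) ^ N * d (x j.succ) (x j.castSucc)) :=
  piecewise_constant_orlicz_estimate_general d htri ψ hψ N x σ hσ h hh1
end
end
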